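/- The value function V of the two-good problem is a viscosity supersolution on (0, ∞) of the HJB equation ρV(h) = max_{ℓ ∈ [ℓ̲, ℓ̄]} H(ℓ, h, V'(h)): for every continuously differentiable test function ψ : (0,∞) → ℝ and every point h₀ > 0 at which V − ψ has a local minimum, ρ V(h₀) ≥ max_{ℓ ∈ [ℓ̲, ℓ̄]} H(ℓ, h₀, ψ'(h₀)). -/

import Mathlib

open MeasureTheory Real Set Filter

/-- State trajectory `h^{h₀,ℓ}(t) = e^{−φt} h₀ + φ ∫₀ᵗ e^{−φ(t−s)} ℓ(s) ds`. -/
noncomputable def traj (φ h₀ : ℝ) (ℓ : ℝ → ℝ) (t : ℝ) : ℝ :=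
  Real.exp (-(φ * t)) * h₀ + φ * ∫ s in (0:ℝ)..t, Real.exp (-(φ * (t - s))) * ℓ s

/-- Instantaneous utility of the two-good problem:
`U(ℓ, h) = ℓ^{1−σ} h^{γ(σ−1)} / (1−σ) + B̃ (1−ℓ)^{1−σ} / (1−σ)`, with `B̃ = B^{1−σ}`. -/
noncomputable def U2 (σ γ B ℓ h : ℝ) : ℝ :=
  ℓ ^ (1 - σ) * h ^ (γ * (σ - 1)) / (1 - σ) +
    B ^ (1 - σ) * (1 - ℓ) ^ (1 - σ) / (1 - σ)

/-- Admissible controls: measurable, with values in `[ℓ̲, ℓ̄]`. -/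
def Admissible (lo hi : ℝ) (ℓ : ℝ → ℝ) : Prop :=
  Measurable ℓ ∧ ∀ t, 0 ≤ t → ℓ t ∈ Set.Icc lo hi

/-- Value function of the two-good problem. -/
noncomputable def V (ρ φ σ γ B lo hi h₀ : ℝ) : ℝ :=
  sSup {x | ∃ ℓ : ℝ → ℝ, Admissible lo hi ℓ ∧
    x = ∫ t in Set.Ioi (0:ℝ), Real.exp (-(ρ * t)) * U2 σ γ B (ℓ t) (traj φ h₀ ℓ t)}

/-- Current-value Hamiltonian
`H(ℓ, h, p) = ℓ^{1−σ} h^{γ(σ−1)}/(1−σ) + B̃ (1−ℓ)^{1−σ}/(1−σ) + p·φ(ℓ−h)`. -/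
noncomputable def Hcv (φ σ γ B ℓ h p : ℝ) : ℝ :=
  U2 σ γ B ℓ h + p * (φ * (ℓ - h))

open Topology

/-! Dynamic programming: following the constant control `c` on `[0, ε]` and then any control
gives `∫₀^ε e^{-ρt} U(c, h_c(t)) dt + e^{-ρε} V(h_c(ε)) ≤ V(h₀)`. Near `h₀` the local minimum
lets us replace `V` by `ψ + (V - ψ)(h₀)`, which turns this into an inequality between two
functions of `ε` that agree at `ε = 0`; comparing their right derivatives at `0` gives
`U(c, h₀) + ψ'(h₀) φ (c - h₀) ≤ ρ V(h₀)`. All payoffs are bounded, uniformly in the control,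
because every trajectory stays in the compact interval `[min h₀ ℓ̲, max h₀ ℓ̄]` away from `0`;
this makes `V` finite and justifies splitting the payoff integral at `ε`. -/

lemma HasDerivAt.le_of_eventually_le_nhdsGT {f g : ℝ → ℝ} {f' g' a : ℝ} (hf : HasDerivAt f f' a)
    (hg : HasDerivAt g g' a) (ha : f a = g a) (hle : ∀ᶠ x in 𝓝[>] a, f x ≤ g x) : f' ≤ g' := by
  have h := (hasDerivAt_iff_tendsto_slope.1 (hf.sub hg)).mono_left (nhdsGT_le_nhdsNE a)
  have : f' - g' ≤ 0 := by
    refine le_of_tendsto h ?_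
    filter_upwards [hle, self_mem_nhdsWithin] with x hx hxa
    rw [slope_def_field, Pi.sub_apply, Pi.sub_apply, ha, sub_self, sub_zero]
    exact div_nonpos_of_nonpos_of_nonneg (sub_nonpos.2 hx) (sub_nonneg.2 (le_of_lt hxa))
  linarith

lemma setIntegral_Ioi_comp_add_right (f : ℝ → ℝ) (a d : ℝ) :
    ∫ x in Ioi a, f (x + d) = ∫ x in Ioi (a + d), f x := by
  simpa using (measurePreserving_add_right volume d).setIntegral_preimage_emb
    (measurableEmbedding_addRight d) f (Ioi (a + d))

section Trajectory

variable {φ h₀ : ℝ} {ℓ : ℝ → ℝ}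

lemma IntervalIntegrable.exp_mul {a b : ℝ} (hℓ : IntervalIntegrable ℓ volume a b) (φ : ℝ) :
    IntervalIntegrable (fun s => exp (φ * s) * ℓ s) volume a b :=
  hℓ.continuousOn_mul (by fun_prop)

lemma traj_zero : traj φ h₀ ℓ 0 = h₀ := by simp [traj]

lemma traj_eq_exp_mul (t : ℝ) :
    traj φ h₀ ℓ t = exp (-(φ * t)) * (h₀ + φ * ∫ s in (0:ℝ)..t, exp (φ * s) * ℓ s) := by
  have h : ∀ s, exp (-(φ * (t - s))) * ℓ s = exp (-(φ * t)) * (exp (φ * s) * ℓ s) := fun s => by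
    rw [← mul_assoc, ← exp_add]; ring_nf
  simp only [traj, h, intervalIntegral.integral_const_mul]
  ring

lemma traj_const (c t : ℝ) :
    traj φ h₀ (fun _ => c) t = exp (-(φ * t)) * h₀ + (1 - exp (-(φ * t))) * c := by
  have hderiv : ∀ s ∈ uIcc 0 t,
      HasDerivAt (fun s => exp (-(φ * (t - s)))) (φ * exp (-(φ * (t - s)))) s := fun s _ => by
    have h : HasDerivAt (fun s => -(φ * (t - s))) φ s := by
      simpa using (((hasDerivAt_id s).const_sub t).const_mul φ).fun_neg
    simpa [mul_comm] using h.exp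
  have hint : φ * ∫ s in (0:ℝ)..t, exp (-(φ * (t - s))) = 1 - exp (-(φ * t)) := by
    rw [← intervalIntegral.integral_const_mul, intervalIntegral.integral_eq_sub_of_hasDerivAt
      hderiv (Continuous.intervalIntegrable (by fun_prop) _ _)]
    simp
  rw [traj, intervalIntegral.integral_mul_const, ← hint]
  ring

lemma continuous_traj (hℓ : ∀ a b, IntervalIntegrable ℓ volume a b) :
    Continuous (traj φ h₀ ℓ) := by
  rw [funext traj_eq_exp_mul]
  have := intervalIntegral.continuous_primitive (fun a b => (hℓ a b).exp_mul φ) 0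
  fun_prop

lemma traj_congr {ℓ' : ℝ → ℝ} {t : ℝ} (ht : 0 ≤ t) (h : EqOn ℓ ℓ' (Ioo 0 t)) :
    traj φ h₀ ℓ t = traj φ h₀ ℓ' t := by
  simp only [traj, intervalIntegral.integral_of_le ht, integral_Ioc_eq_integral_Ioo]
  rw [setIntegral_congr_fun measurableSet_Ioo fun s hs => by rw [h hs]]

lemma traj_mono {ℓ' : ℝ → ℝ} {t : ℝ} (hφ : 0 ≤ φ) (ht : 0 ≤ t)
    (hℓ : IntervalIntegrable ℓ volume 0 t) (hℓ' : IntervalIntegrable ℓ' volume 0 t)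
    (hle : ∀ s ∈ Icc 0 t, ℓ s ≤ ℓ' s) : traj φ h₀ ℓ t ≤ traj φ h₀ ℓ' t := by
  have hexp : ContinuousOn (fun s => exp (-(φ * (t - s)))) (uIcc 0 t) := by fun_prop
  unfold traj
  gcongr
  exact intervalIntegral.integral_mono_on ht (hℓ.continuousOn_mul hexp)
    (hℓ'.continuousOn_mul hexp) fun s hs => by gcongr; exact hle s hs

lemma traj_mem_Icc {lo hi t : ℝ} (hφ : 0 ≤ φ) (ht : 0 ≤ t)
    (hℓ : IntervalIntegrable ℓ volume 0 t) (hb : ∀ s ∈ Icc 0 t, ℓ s ∈ Icc lo hi) :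
    traj φ h₀ ℓ t ∈ Icc (min h₀ lo) (max h₀ hi) := by
  have hθ : exp (-(φ * t)) ≤ 1 := exp_le_one_iff.mpr (by nlinarith)
  have hθ' := exp_pos (-(φ * t))
  have hlo := traj_mono (h₀ := h₀) hφ ht intervalIntegrable_const hℓ fun s hs => (hb s hs).1
  have hhi := traj_mono (h₀ := h₀) hφ ht hℓ intervalIntegrable_const fun s hs => (hb s hs).2
  rw [traj_const] at hlo hhi
  constructor
  · nlinarith [min_le_left h₀ lo, min_le_right h₀ lo]
  · nlinarith [le_max_left h₀ hi, le_max_right h₀ hi]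

lemma traj_add (hℓ : ∀ a b, IntervalIntegrable ℓ volume a b) (ε s : ℝ) :
    traj φ h₀ ℓ (s + ε) = traj φ (traj φ h₀ ℓ ε) (fun v => ℓ (v + ε)) s := by
  have hshift : ∫ v in (0:ℝ)..s, exp (φ * v) * ℓ (v + ε)
      = exp (-(φ * ε)) * ∫ u in ε..(s + ε), exp (φ * u) * ℓ u := by
    have h := intervalIntegral.integral_comp_add_right (a := 0) (b := s)
      (fun u => exp (φ * u) * ℓ u) ε
    rw [zero_add] at h
    rw [← h, ← intervalIntegral.integral_const_mul]
    congr 1 with v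
    rw [← mul_assoc, ← exp_add]
    ring_nf
  rw [traj_eq_exp_mul, traj_eq_exp_mul, traj_eq_exp_mul, hshift,
    ← intervalIntegral.integral_add_adjacent_intervals ((hℓ 0 ε).exp_mul φ)
      ((hℓ ε (s + ε)).exp_mul φ)]
  have : exp (-(φ * (s + ε))) = exp (-(φ * s)) * exp (-(φ * ε)) := by
    rw [← exp_add]; ring_nf
  rw [this]
  ring

end Trajectory

section Payoff

variable {ρ φ σ γ B lo hi h₀ : ℝ} {ℓ : ℝ → ℝ}

lemma intervalIntegrable_of_mem_Icc (hm : Measurable ℓ) (hb : ∀ t, ℓ t ∈ Icc lo hi) (a b : ℝ) :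
    IntervalIntegrable ℓ volume a b :=
  (intervalIntegrable_const (c := max |lo| |hi|)).mono_fun' hm.aestronglyMeasurable
    (ae_of_all _ fun t => abs_le_max_abs_abs (hb t).1 (hb t).2)

noncomputable def runningPayoff (ρ φ σ γ B h₀ : ℝ) (ℓ : ℝ → ℝ) (t : ℝ) : ℝ :=
  exp (-(ρ * t)) * U2 σ γ B (ℓ t) (traj φ h₀ ℓ t)

noncomputable def payoff (ρ φ σ γ B h₀ : ℝ) (ℓ : ℝ → ℝ) : ℝ :=
  ∫ t in Ioi 0, runningPayoff ρ φ σ γ B h₀ ℓ t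

lemma V_eq_sSup_payoff : V ρ φ σ γ B lo hi h₀ =
    sSup {x | ∃ ℓ, Admissible lo hi ℓ ∧ x = payoff ρ φ σ γ B h₀ ℓ} := rfl

lemma continuousOn_U2 (hlo : 0 < lo) (hhi : hi < 1) {m M : ℝ} (hm : 0 < m) :
    ContinuousOn (fun p : ℝ × ℝ => U2 σ γ B p.1 p.2) (Icc lo hi ×ˢ Icc m M) := by
  have h₁ : ∀ p ∈ Icc lo hi ×ˢ Icc m M, p.1 ≠ 0 ∨ 0 ≤ 1 - σ := fun p hp =>
    Or.inl (hlo.trans_le hp.1.1).ne'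
  have h₂ : ∀ p ∈ Icc lo hi ×ˢ Icc m M, p.2 ≠ 0 ∨ 0 ≤ γ * (σ - 1) := fun p hp =>
    Or.inl (hm.trans_le hp.2.1).ne'
  have h₃ : ∀ p ∈ Icc lo hi ×ˢ Icc m M, 1 - p.1 ≠ 0 ∨ 0 ≤ 1 - σ := fun p hp =>
    Or.inl (sub_pos.2 (hp.1.2.trans_lt hhi)).ne'
  exact (((continuousOn_fst.rpow_const h₁).mul (continuousOn_snd.rpow_const h₂)).div_const _).add
    ((continuousOn_const.mul ((continuousOn_const.sub continuousOn_fst).rpow_const h₃)).div_const _)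

lemma measurable_runningPayoff (hm : Measurable ℓ) (htraj : Continuous (traj φ h₀ ℓ)) :
    Measurable (runningPayoff ρ φ σ γ B h₀ ℓ) := by
  have := htraj.measurable
  unfold runningPayoff U2
  fun_prop

lemma exists_norm_runningPayoff_le (hφ : 0 ≤ φ) (hlo : 0 < lo) (hhi : hi < 1) (hh₀ : 0 < h₀) :
    ∃ C, ∀ ℓ : ℝ → ℝ, Measurable ℓ → (∀ t, ℓ t ∈ Icc lo hi) →
      ∀ t, 0 ≤ t → ‖runningPayoff ρ φ σ γ B h₀ ℓ t‖ ≤ C * exp (-ρ * t) := by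
  obtain ⟨C, hC⟩ := (isCompact_Icc.prod isCompact_Icc).exists_bound_of_continuousOn
    (continuousOn_U2 (σ := σ) (γ := γ) (B := B) hlo hhi (lt_min hh₀ hlo) (M := max h₀ hi))
  refine ⟨C, fun ℓ hm hb t ht => ?_⟩
  have htraj := traj_mem_Icc (h₀ := h₀) hφ ht (intervalIntegrable_of_mem_Icc hm hb 0 t)
    fun s _ => hb s
  rw [runningPayoff, norm_mul, norm_of_nonneg (exp_pos _).le, mul_comm, neg_mul]
  exact mul_le_mul_of_nonneg_right (hC (ℓ t, _) ⟨hb t, htraj⟩) (exp_pos _).le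

lemma integrableOn_runningPayoff (hρ : 0 < ρ) (hφ : 0 ≤ φ) (hlo : 0 < lo) (hhi : hi < 1)
    (hh₀ : 0 < h₀) (hm : Measurable ℓ) (hb : ∀ t, ℓ t ∈ Icc lo hi) :
    IntegrableOn (runningPayoff ρ φ σ γ B h₀ ℓ) (Ioi 0) := by
  obtain ⟨C, hC⟩ := exists_norm_runningPayoff_le (ρ := ρ) (σ := σ) (γ := γ) (B := B)
    hφ hlo hhi hh₀
  refine ((exp_neg_integrableOn_Ioi 0 hρ).const_mul C).mono'
    (measurable_runningPayoff hm
      (continuous_traj (intervalIntegrable_of_mem_Icc hm hb))).aestronglyMeasurable ?_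
  exact (ae_restrict_iff' measurableSet_Ioi).2
    (ae_of_all _ fun t ht => hC ℓ hm hb t (le_of_lt ht))

lemma exists_payoff_le (hρ : 0 < ρ) (hφ : 0 ≤ φ) (hlo : 0 < lo) (hhi : hi < 1)
    (hh₀ : 0 < h₀) : ∃ K, ∀ ℓ : ℝ → ℝ, Measurable ℓ → (∀ t, ℓ t ∈ Icc lo hi) →
      payoff ρ φ σ γ B h₀ ℓ ≤ K := by
  obtain ⟨C, hC⟩ := exists_norm_runningPayoff_le (ρ := ρ) (σ := σ) (γ := γ) (B := B)
    hφ hlo hhi hh₀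
  refine ⟨∫ t in Ioi 0, C * exp (-ρ * t), fun ℓ hm hb => (le_abs_self _).trans ?_⟩
  exact norm_integral_le_of_norm_le ((exp_neg_integrableOn_Ioi 0 hρ).const_mul C)
    ((ae_restrict_iff' measurableSet_Ioi).2
      (ae_of_all _ fun t ht => hC ℓ hm hb t (le_of_lt ht)))

lemma payoff_congr {ℓ' : ℝ → ℝ} (h : EqOn ℓ ℓ' (Ioi 0)) :
    payoff ρ φ σ γ B h₀ ℓ = payoff ρ φ σ γ B h₀ ℓ' := by
  refine setIntegral_congr_fun measurableSet_Ioi fun t ht => ?_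
  rw [runningPayoff, runningPayoff, h ht,
    traj_congr (le_of_lt ht) fun s hs => h (show (0:ℝ) < s from hs.1)]

lemma Admissible.payoff_projIcc (hlohi : lo ≤ hi) (hℓ : Admissible lo hi ℓ) :
    payoff ρ φ σ γ B h₀ (fun t => projIcc lo hi hlohi (ℓ t)) = payoff ρ φ σ γ B h₀ ℓ :=
  payoff_congr fun t ht => by simp [projIcc_of_mem hlohi (hℓ.2 t (le_of_lt ht))]

lemma payoff_le_V (hρ : 0 < ρ) (hφ : 0 ≤ φ) (hlo : 0 < lo) (hhi : hi < 1) (hh₀ : 0 < h₀)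
    (hm : Measurable ℓ) (hb : ∀ t, ℓ t ∈ Icc lo hi) :
    payoff ρ φ σ γ B h₀ ℓ ≤ V ρ φ σ γ B lo hi h₀ := by
  have hlohi : lo ≤ hi := (hb 0).1.trans (hb 0).2
  obtain ⟨K, hK⟩ := exists_payoff_le (σ := σ) (γ := γ) (B := B) hρ hφ hlo hhi hh₀
  rw [V_eq_sSup_payoff]
  refine le_csSup ⟨K, ?_⟩ ⟨ℓ, ⟨hm, fun t _ => hb t⟩, rfl⟩
  rintro _ ⟨ℓ', hℓ', rfl⟩
  rw [← hℓ'.payoff_projIcc hlohi]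
  exact hK _ ((continuous_subtype_val.comp continuous_projIcc).measurable.comp hℓ'.1)
    fun t => (projIcc lo hi hlohi (ℓ' t)).2

lemma V_le_of_forall_payoff_le (hlohi : lo ≤ hi) {b : ℝ}
    (h : ∀ ℓ : ℝ → ℝ, Measurable ℓ → (∀ t, ℓ t ∈ Icc lo hi) → payoff ρ φ σ γ B h₀ ℓ ≤ b) :
    V ρ φ σ γ B lo hi h₀ ≤ b := by
  rw [V_eq_sSup_payoff]
  refine csSup_le ⟨_, fun _ => lo, ⟨measurable_const, fun _ _ => ⟨le_rfl, hlohi⟩⟩, rfl⟩ ?_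
  rintro _ ⟨ℓ, hℓ, rfl⟩
  rw [← hℓ.payoff_projIcc hlohi]
  exact h _ ((continuous_subtype_val.comp continuous_projIcc).measurable.comp hℓ.1)
    fun t => (projIcc lo hi hlohi (ℓ t)).2

end Payoff

section DynamicProgramming

variable {ρ φ σ γ B lo hi h₀ ε : ℝ} {ℓ₁ ℓ₂ : ℝ → ℝ}

noncomputable def concatControl (ε : ℝ) (ℓ₁ ℓ₂ : ℝ → ℝ) (t : ℝ) : ℝ :=
  if t < ε then ℓ₁ t else ℓ₂ (t - ε)

lemma measurable_concatControl (h₁ : Measurable ℓ₁) (h₂ : Measurable ℓ₂) :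
    Measurable (concatControl ε ℓ₁ ℓ₂) :=
  Measurable.ite measurableSet_Iio h₁ (h₂.comp (measurable_id.sub_const ε))

lemma concatControl_mem_Icc (h₁ : ∀ t, ℓ₁ t ∈ Icc lo hi) (h₂ : ∀ t, ℓ₂ t ∈ Icc lo hi) (t : ℝ) :
    concatControl ε ℓ₁ ℓ₂ t ∈ Icc lo hi := by
  unfold concatControl
  split_ifs
  exacts [h₁ t, h₂ _]

lemma traj_concatControl_of_le {t : ℝ} (ht : 0 ≤ t) (htε : t ≤ ε) :
    traj φ h₀ (concatControl ε ℓ₁ ℓ₂) t = traj φ h₀ ℓ₁ t :=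
  traj_congr ht fun _ hs => if_pos (hs.2.trans_le htε)

lemma traj_concatControl_add (hℓ : ∀ a b, IntervalIntegrable (concatControl ε ℓ₁ ℓ₂) volume a b)
    (hε : 0 ≤ ε) {s : ℝ} (hs : 0 ≤ s) :
    traj φ h₀ (concatControl ε ℓ₁ ℓ₂) (s + ε) = traj φ (traj φ h₀ ℓ₁ ε) ℓ₂ s := by
  rw [traj_add hℓ, traj_concatControl_of_le hε le_rfl]
  exact traj_congr hs fun v hv => by simp [concatControl, hv.1.le]

lemma payoff_concatControl (hε : 0 ≤ ε)
    (hℓ : ∀ a b, IntervalIntegrable (concatControl ε ℓ₁ ℓ₂) volume a b)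
    (hint : IntegrableOn (runningPayoff ρ φ σ γ B h₀ (concatControl ε ℓ₁ ℓ₂)) (Ioi 0)) :
    payoff ρ φ σ γ B h₀ (concatControl ε ℓ₁ ℓ₂) =
      (∫ t in (0:ℝ)..ε, runningPayoff ρ φ σ γ B h₀ ℓ₁ t) +
        exp (-(ρ * ε)) * payoff ρ φ σ γ B (traj φ h₀ ℓ₁ ε) ℓ₂ := by
  have hsplit := setIntegral_union (Ioc_disjoint_Ioi le_rfl) measurableSet_Ioi
    (hint.mono_set Ioc_subset_Ioi_self) (hint.mono_set (Ioi_subset_Ioi hε))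
  rw [Ioc_union_Ioi_eq_Ioi hε] at hsplit
  rw [payoff, hsplit, intervalIntegral.integral_of_le hε]
  congr 1
  · simp only [integral_Ioc_eq_integral_Ioo]
    refine setIntegral_congr_fun measurableSet_Ioo fun t ht => ?_
    simp [runningPayoff, concatControl, ht.2, traj_concatControl_of_le ht.1.le ht.2.le]
  · rw [payoff, ← zero_add ε, ← setIntegral_Ioi_comp_add_right, zero_add, ← integral_const_mul]
    refine setIntegral_congr_fun measurableSet_Ioi fun s hs => ?_
    have hs : (0:ℝ) ≤ s := le_of_lt hs
    simp only [runningPayoff, traj_concatControl_add hℓ hε hs, concatControl, add_sub_cancel_right,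
      if_neg (not_lt.2 (le_add_of_nonneg_left hs)), ← mul_assoc, ← exp_add]
    ring_nf

lemma integral_add_exp_mul_V_traj_le (hρ : 0 < ρ) (hφ : 0 ≤ φ) (hlo : 0 < lo) (hhi : hi < 1)
    (hh₀ : 0 < h₀) (hε : 0 ≤ ε) (hm : Measurable ℓ₁) (hb : ∀ t, ℓ₁ t ∈ Icc lo hi) :
    (∫ t in (0:ℝ)..ε, runningPayoff ρ φ σ γ B h₀ ℓ₁ t) +
        exp (-(ρ * ε)) * V ρ φ σ γ B lo hi (traj φ h₀ ℓ₁ ε) ≤ V ρ φ σ γ B lo hi h₀ := by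
  have hE := exp_pos (-(ρ * ε))
  suffices h : V ρ φ σ γ B lo hi (traj φ h₀ ℓ₁ ε) ≤
      (V ρ φ σ γ B lo hi h₀ - ∫ t in (0:ℝ)..ε, runningPayoff ρ φ σ γ B h₀ ℓ₁ t) / exp (-(ρ * ε)) by
    rw [le_div_iff₀ hE] at h
    linarith
  refine V_le_of_forall_payoff_le ((hb 0).1.trans (hb 0).2) fun ℓ₂ hm₂ hb₂ => ?_
  have hmL := measurable_concatControl (ε := ε) hm hm₂
  have hbL := concatControl_mem_Icc (ε := ε) hb hb₂
  have h := payoff_le_V (σ := σ) (γ := γ) (B := B) hρ hφ hlo hhi hh₀ hmL hbL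
  rw [payoff_concatControl hε (intervalIntegrable_of_mem_Icc hmL hbL)
    (integrableOn_runningPayoff hρ hφ hlo hhi hh₀ hmL hbL)] at h
  rw [le_div_iff₀ hE]
  linarith

end DynamicProgramming

section Viscosity

variable {ρ φ σ γ B lo hi h₀ c : ℝ}

lemma hasDerivAt_traj_const (φ h₀ c t : ℝ) :
    HasDerivAt (traj φ h₀ (fun _ => c)) (φ * (c - traj φ h₀ (fun _ => c) t)) t := by
  rw [funext (traj_const (φ := φ) (h₀ := h₀) c)]
  beta_reduce
  have h : HasDerivAt (fun t => exp (-(φ * t))) (exp (-(φ * t)) * -φ) t := by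
    simpa using ((hasDerivAt_id t).const_mul φ).fun_neg.exp
  exact ((h.mul_const h₀).fun_add ((h.const_sub 1).mul_const c)).congr_deriv (by ring)

lemma hasDerivAt_integral_runningPayoff_const (hh₀ : 0 < h₀) :
    HasDerivAt (fun ε => ∫ t in (0:ℝ)..ε, runningPayoff ρ φ σ γ B h₀ (fun _ => c) t)
      (U2 σ γ B c h₀) 0 := by
  have hcont : Continuous (traj φ h₀ (fun _ => c)) :=
    continuous_traj fun _ _ => intervalIntegrable_const
  have hmeas := measurable_runningPayoff (ρ := ρ) (σ := σ) (γ := γ) (B := B) measurable_const hcont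
  have hrpow : ContinuousAt (fun t => traj φ h₀ (fun _ => c) t ^ (γ * (σ - 1))) 0 :=
    (continuousAt_rpow_const _ _ (Or.inl (by rw [traj_zero]; exact hh₀.ne'))).comp
      hcont.continuousAt
  have hcontAt : ContinuousAt (runningPayoff ρ φ σ γ B h₀ (fun _ => c)) 0 :=
    (continuous_exp.comp (continuous_const.mul continuous_id).neg).continuousAt.mul
      (((continuousAt_const.mul hrpow).div_const _).add continuousAt_const)
  simpa [runningPayoff, traj_zero] using intervalIntegral.integral_hasDerivAt_right
    (IntervalIntegrable.refl) hmeas.aestronglyMeasurable.stronglyMeasurableAtFilter hcontAt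

lemma Hcv_le_of_isLocalMin (hρ : 0 < ρ) (hφ : 0 ≤ φ) (hlo : 0 < lo) (hhi : hi < 1) (hh₀ : 0 < h₀)
    {ψ : ℝ → ℝ} {p : ℝ} (hψ : HasDerivAt ψ p h₀)
    (hmin : IsLocalMin (fun h => V ρ φ σ γ B lo hi h - ψ h) h₀) (hc : c ∈ Icc lo hi) :
    Hcv φ σ γ B c h₀ p ≤ ρ * V ρ φ σ γ B lo hi h₀ := by
  set y := traj φ h₀ (fun _ => c)
  set v := V ρ φ σ γ B lo hi h₀ - ψ h₀
  have hy : HasDerivAt y (φ * (c - h₀)) 0 := by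
    simpa [y, traj_zero] using hasDerivAt_traj_const φ h₀ c 0
  have hE : HasDerivAt (fun ε => exp (-(ρ * ε))) (-ρ) 0 := by
    simpa using ((hasDerivAt_id (0:ℝ)).const_mul ρ).fun_neg.exp
  have hψy : HasDerivAt (fun ε => ψ (y ε)) (p * (φ * (c - h₀))) 0 :=
    (show HasDerivAt ψ p (traj φ h₀ (fun _ => c) 0) by rwa [traj_zero]).comp 0 hy
  have hW : HasDerivAt
      (fun ε => (∫ t in (0:ℝ)..ε, runningPayoff ρ φ σ γ B h₀ (fun _ => c) t) +
        exp (-(ρ * ε)) * ψ (y ε))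
      (U2 σ γ B c h₀ + (-ρ * ψ h₀ + p * (φ * (c - h₀)))) 0 := by
    simpa [y, traj_zero] using
      (hasDerivAt_integral_runningPayoff_const hh₀).fun_add (hE.fun_mul hψy)
  have hR : HasDerivAt (fun ε => ψ h₀ + (1 - exp (-(ρ * ε))) * v) (ρ * v) 0 := by
    simpa using ((hE.const_sub 1).mul_const v).const_add (ψ h₀)
  have hy₀ : Tendsto y (𝓝[>] 0) (𝓝 h₀) := by
    simpa [y, traj_zero] using
      ((continuous_traj fun _ _ => intervalIntegrable_const).tendsto 0).mono_left
        nhdsWithin_le_nhds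
  have hle : ∀ᶠ ε in 𝓝[>] 0,
      (∫ t in (0:ℝ)..ε, runningPayoff ρ φ σ γ B h₀ (fun _ => c) t) + exp (-(ρ * ε)) * ψ (y ε) ≤
        ψ h₀ + (1 - exp (-(ρ * ε))) * v := by
    filter_upwards [hy₀.eventually hmin, self_mem_nhdsWithin] with ε hvε hε
    have hdpp := integral_add_exp_mul_V_traj_le (σ := σ) (γ := γ) (B := B) hρ hφ hlo hhi hh₀
      (le_of_lt hε) measurable_const fun _ => hc
    have := mul_le_mul_of_nonneg_left hvε (exp_pos (-(ρ * ε))).le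
    simp only [v] at this ⊢
    linarith
  have := hW.le_of_eventually_le_nhdsGT hR (by simp [y, v, traj_zero]) hle
  rw [Hcv]
  linarith

end Viscosity

theorem V_viscosity_supersolution_general (ρ φ σ γ B lo hi : ℝ)
    (hρ : 0 < ρ) (hφ : 0 < φ) (hlo : 0 < lo) (hlohi : lo ≤ hi) (hhi : hi < 1)
    (ψ : ℝ → ℝ) (hψ : ContDiffOn ℝ 1 ψ (Set.Ioi (0:ℝ)))
    (h₀ : ℝ) (hh₀ : h₀ ∈ Set.Ioi (0:ℝ))
    (hmin : IsLocalMinOn (fun h => V ρ φ σ γ B lo hi h - ψ h) (Set.Ioi (0:ℝ)) h₀) :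
    sSup ((fun ℓ => Hcv φ σ γ B ℓ h₀ (deriv ψ h₀)) '' Set.Icc lo hi) ≤
      ρ * V ρ φ σ γ B lo hi h₀ := by
  have hψ' : HasDerivAt ψ (deriv ψ h₀) h₀ :=
    ((hψ.differentiableOn one_ne_zero).differentiableAt (Ioi_mem_nhds hh₀)).hasDerivAt
  refine csSup_le ((nonempty_Icc.2 hlohi).image _) ?_
  rintro _ ⟨c, hc, rfl⟩
  exact Hcv_le_of_isLocalMin hρ hφ.le hlo hhi hh₀ hψ' (hmin.isLocalMin (Ioi_mem_nhds hh₀)) hc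

/-- `V` is a viscosity supersolution on `(0,∞)` of the HJB equation
`ρV(h) = max_{ℓ ∈ [ℓ̲, ℓ̄]} H(ℓ, h, V'(h))`. -/
theorem V_viscosity_supersolution (ρ φ σ γ B lo hi : ℝ)
    (hρ : 0 < ρ) (hφ : 0 < φ) (hσ : 1 < σ) (hγ0 : 0 < γ) (hγ1 : γ < 1)
    (hγσ : 1 < γ * (σ - 1)) (hB : 0 < B) (hlo : 0 < lo) (hlohi : lo ≤ hi) (hhi : hi < 1)
    (ψ : ℝ → ℝ) (hψ : ContDiffOn ℝ 1 ψ (Set.Ioi (0:ℝ)))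
    (h₀ : ℝ) (hh₀ : h₀ ∈ Set.Ioi (0:ℝ))
    (hmin : IsLocalMinOn (fun h => V ρ φ σ γ B lo hi h - ψ h) (Set.Ioi (0:ℝ)) h₀) :
    sSup ((fun ℓ => Hcv φ σ γ B ℓ h₀ (deriv ψ h₀)) '' Set.Icc lo hi) ≤
      ρ * V ρ φ σ γ B lo hi h₀ :=
  V_viscosity_supersolution_general ρ φ σ γ B lo hi hρ hφ hlo hlohi hhi ψ hψ h₀ hh₀ hmin
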